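/- Let D = D_1 × ··· × D_n be a product distribution on [K]^n, let θ^1, ..., θ^t be i.i.d. samples from D, let D̂_i^t(k) = (1/t)·Σ_{s=1}^t 1[θ_i^s = k] be the empirical marginal of coordinate i, and let D̂^t = Π_{i=1}^n D̂_i^t be the product of the empirical marginals. Then E[δ(D, D̂^t)] ≤ sqrt(nK/t), where δ(P, Q) = (1/2)·Σ_{θ∈[K]^n}|P(θ) − Q(θ)| is the total variation distance. -/

import Mathlib

/-!
Write `δ` for the total variation distance and `H² = ½ ∑ (√P - √Q)²` for the squared Hellinger
distance. By Cauchy–Schwarz `E δ ≤ √(E δ²)`, and pointwise `δ² ≤ 2 H²`. Since `H² = 1 - BC` with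
the Bhattacharyya coefficient `BC = ∑ √P √Q` multiplicative over products, and
`1 - ∏ rᵢ ≤ ∑ (1 - rᵢ)` on `[0, 1]`, squared Hellinger distance is subadditive over products.
The `i`-th empirical marginal is the empirical distribution of `t` i.i.d. draws from `Dᵢ`; from
`(√p - √p̂)² ≤ (p̂ - p)² / p` and `Var p̂(k) = p(k) (1 - p(k)) / t` we get
`E H²(Dᵢ, D̂ᵢ) ≤ K / (2t)`. Hence `E δ ≤ √(2 · n · K / (2t))`.
-/

open Finset

noncomputable section

/-- `D` is a probability distribution on the finite type `α`. -/
def IsDist {α : Type*} [Fintype α] (D : α → ℝ) : Prop :=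
  (∀ a, 0 ≤ D a) ∧ ∑ a, D a = 1

/-- The product of the empirical marginals built from `t` samples `ω : Fin t → [K]^n`:
`D̂^t(θ) = ∏_i D̂_i^t(θ_i)` with `D̂_i^t(k) = (1/t)·∑_s 1[ω s i = k]`. -/
def empProd {n K : ℕ} (t : ℕ) (ω : Fin t → (Fin n → Fin K)) (θ : Fin n → Fin K) : ℝ :=
  ∏ i, ((1 / (t : ℝ)) * ∑ s, if ω s i = θ i then (1 : ℝ) else 0)

open Real

section ProductDistribution

variable {ι α : Type*} [Fintype ι] [DecidableEq ι] [Fintype α]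

theorem sum_prod_mul_prod (p g : ι → α → ℝ) :
    ∑ x : ι → α, (∏ i, p i (x i)) * ∏ i, g i (x i) = ∏ i, ∑ a, p i a * g i a := by
  simp_rw [← prod_mul_distrib]
  exact (Fintype.prod_sum fun i a => p i a * g i a).symm

theorem IsDist.pi {p : ι → α → ℝ} (hp : ∀ i, IsDist (p i)) :
    IsDist fun x : ι → α => ∏ i, p i (x i) := by
  refine ⟨fun x => prod_nonneg fun i _ => (hp i).1 _, ?_⟩
  rw [← Fintype.prod_sum (κ := fun _ => α) p]
  simp [(hp _).2]

theorem sum_prod_mul_apply {p : ι → α → ℝ} (hp : ∀ i, ∑ a, p i a = 1) (i : ι) (f : α → ℝ) :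
    ∑ x : ι → α, (∏ l, p l (x l)) * f (x i) = ∑ a, p i a * f a := by
  have := sum_prod_mul_prod p fun l a => if l = i then f a else 1
  simpa [prod_ite_eq', mul_ite, hp] using this

theorem sum_prod_mul_apply_mul_apply {p : ι → α → ℝ} (hp : ∀ i, ∑ a, p i a = 1) {i j : ι}
    (hij : i ≠ j) (f g : α → ℝ) :
    ∑ x : ι → α, (∏ l, p l (x l)) * (f (x i) * g (x j)) =
      (∑ a, p i a * f a) * ∑ a, p j a * g a := by
  set c : ι → α → ℝ := fun l a => if l = i then f a else if l = j then g a else 1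
  have hc (x : ι → α) : ∏ l, c l (x l) = f (x i) * g (x j) := by
    rw [Fintype.prod_eq_mul i j hij fun l hl => by simp [c, hl.1, hl.2]]
    simp [c, hij.symm]
  have hpc : ∏ l, ∑ a, p l a * c l a = (∑ a, p i a * f a) * ∑ a, p j a * g a := by
    rw [Fintype.prod_eq_mul i j hij fun l hl => by simp [c, hl.1, hl.2, hp]]
    simp [c, hij.symm]
  simpa only [hc, hpc] using sum_prod_mul_prod p c

end ProductDistribution

theorem sum_samples_mul_sum_columns {ι σ α : Type*} [Fintype ι] [DecidableEq ι] [Fintype σ]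
    [DecidableEq σ] [Fintype α] {p : ι → α → ℝ} (hp : ∀ i, IsDist (p i))
    (g : ι → (σ → α) → ℝ) :
    ∑ ω : σ → ι → α, (∏ s, ∏ l, p l (ω s l)) * ∑ i, g i (fun s => ω s i) =
      ∑ i, ∑ v : σ → α, (∏ s, p i (v s)) * g i v := by
  simp_rw [mul_sum]
  rw [sum_comm]
  refine sum_congr rfl fun i _ => ?_
  rw [← (Equiv.piComm fun (_ : ι) (_ : σ) => α).sum_comp]
  simp only [Equiv.piComm_apply]
  simp_rw [prod_comm (s := (univ : Finset σ))]
  exact sum_prod_mul_apply (fun l => (IsDist.pi fun _ : σ => hp l).2) i (g i)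

section Empirical

variable {α : Type*} [DecidableEq α] {t : ℕ}

def empirical (t : ℕ) (v : Fin t → α) (a : α) : ℝ :=
  (1 / (t : ℝ)) * ∑ s, if v s = a then (1 : ℝ) else 0

theorem empProd_eq_prod_empirical {n K : ℕ} (ω : Fin t → Fin n → Fin K) :
    empProd t ω = fun θ => ∏ i, empirical t (fun s => ω s i) (θ i) :=
  rfl

theorem empirical_nonneg (v : Fin t → α) (a : α) : 0 ≤ empirical t v a := by
  unfold empirical; positivity

theorem isDist_empirical [Fintype α] (ht : t ≠ 0) (v : Fin t → α) : IsDist (empirical t v) := by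
  refine ⟨empirical_nonneg v, ?_⟩
  simp only [empirical, ← mul_sum]
  rw [sum_comm]
  simp [ht]

variable [Fintype α] {p : α → ℝ}

theorem sum_iid_mul_empirical (hp : ∑ a, p a = 1) (ht : t ≠ 0) (a : α) :
    ∑ v : Fin t → α, (∏ s, p (v s)) * empirical t v a = p a := by
  simp_rw [empirical, mul_left_comm _ (1 / (t : ℝ)), mul_sum]
  rw [sum_comm]
  simp_rw [← mul_sum]
  simp only [sum_prod_mul_apply (fun _ => hp) _ fun b => if b = a then (1 : ℝ) else 0]
  simp [ht]

theorem sum_iid_mul_sq_empirical_sub (hp : ∑ a, p a = 1) (ht : t ≠ 0) (a : α) :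
    ∑ v : Fin t → α, (∏ s, p (v s)) * (empirical t v a - p a) ^ 2 = p a * (1 - p a) / t := by
  set X : α → ℝ := fun b => (if b = a then 1 else 0) - p a
  have hmean : ∑ b, p b * X b = 0 := by simp [X, mul_sub, sum_sub_distrib, ← sum_mul, hp]
  have hsq : ∑ b, p b * (X b * X b) = p a * (1 - p a) := by
    simp [X, mul_sub, sub_mul, sum_sub_distrib, ← sum_mul, hp]
  have hcov (s s' : Fin t) : ∑ v : Fin t → α, (∏ l, p (v l)) * (X (v s) * X (v s')) =
      if s = s' then p a * (1 - p a) else 0 := by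
    split_ifs with h
    · subst h
      simp only [sum_prod_mul_apply (fun _ => hp) _ fun b => X b * X b, hsq]
    · rw [sum_prod_mul_apply_mul_apply (fun _ => hp) h, hmean, zero_mul]
  have hcentre (v : Fin t → α) : empirical t v a - p a = (1 / (t : ℝ)) * ∑ s, X (v s) := by
    simp only [empirical, X, sum_sub_distrib, sum_const, card_univ, Fintype.card_fin, nsmul_eq_mul]
    field_simp
  calc ∑ v : Fin t → α, (∏ s, p (v s)) * (empirical t v a - p a) ^ 2
      = ∑ v : Fin t → α, ∑ s, ∑ s',
          (1 / (t : ℝ)) ^ 2 * ((∏ l, p (v l)) * (X (v s) * X (v s'))) := by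
        simp_rw [hcentre, mul_pow, sq (∑ s, X _), sum_mul_sum, mul_sum, mul_left_comm (∏ s, p _)]
    _ = (1 / (t : ℝ)) ^ 2 * ∑ s : Fin t, ∑ s' : Fin t, if s = s' then p a * (1 - p a) else 0 := by
        rw [sum_comm_cycle, sum_comm_cycle]
        simp_rw [← hcov, mul_sum]
    _ = p a * (1 - p a) / t := by
        simp only [sum_ite_eq, mem_univ, if_true, sum_const, card_univ, Fintype.card_fin,
          nsmul_eq_mul]
        field_simp

end Empirical

section Divergences

variable {β : Type*} [Fintype β]

def tvDist (P Q : β → ℝ) : ℝ := (1 / 2) * ∑ x, |P x - Q x|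

def sqHellinger (P Q : β → ℝ) : ℝ := (1 / 2) * ∑ x, (√(P x) - √(Q x)) ^ 2

def bhattacharyya (P Q : β → ℝ) : ℝ := ∑ x, √(P x) * √(Q x)

theorem sqHellinger_nonneg (P Q : β → ℝ) : 0 ≤ sqHellinger P Q := by
  unfold sqHellinger; positivity

variable {P Q : β → ℝ}

theorem sqHellinger_eq_one_sub_bhattacharyya (hP : IsDist P) (hQ : IsDist Q) :
    sqHellinger P Q = 1 - bhattacharyya P Q := by
  have hsq (x : β) : (√(P x) - √(Q x)) ^ 2 = P x + Q x - 2 * (√(P x) * √(Q x)) := by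
    rw [sub_sq, sq_sqrt (hP.1 x), sq_sqrt (hQ.1 x)]; ring
  simp only [sqHellinger, bhattacharyya, hsq, sum_sub_distrib, sum_add_distrib, ← mul_sum, hP.2,
    hQ.2]
  ring

theorem tvDist_sq_le_two_mul_sqHellinger (hP : IsDist P) (hQ : IsDist Q) :
    tvDist P Q ^ 2 ≤ 2 * sqHellinger P Q := by
  have hP' (x : β) := sq_sqrt (hP.1 x)
  have hQ' (x : β) := sq_sqrt (hQ.1 x)
  have habs (x : β) : |√(P x) - √(Q x)| * (√(P x) + √(Q x)) = |P x - Q x| := by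
    rw [← abs_of_nonneg (add_nonneg (sqrt_nonneg (P x)) (sqrt_nonneg (Q x))), ← abs_mul]
    congr 1
    linear_combination hP' x - hQ' x
  have hminus : ∑ x, (√(P x) - √(Q x)) ^ 2 = 2 * sqHellinger P Q := by
    unfold sqHellinger; ring
  have hplus : ∑ x, (√(P x) + √(Q x)) ^ 2 = 4 - 2 * sqHellinger P Q := by
    have (x : β) : (√(P x) + √(Q x)) ^ 2 = 2 * P x + 2 * Q x - (√(P x) - √(Q x)) ^ 2 := by
      linear_combination 2 * hP' x + 2 * hQ' x
    simp only [this, sum_sub_distrib, sum_add_distrib, ← mul_sum, hP.2, hQ.2, hminus]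
    ring
  have hcs := sum_mul_sq_le_sq_mul_sq univ (fun x => |√(P x) - √(Q x)|)
    fun x => √(P x) + √(Q x)
  simp only [habs, sq_abs, hminus, hplus] at hcs
  have hH := sqHellinger_nonneg P Q
  calc tvDist P Q ^ 2 = (1 / 4) * (∑ x, |P x - Q x|) ^ 2 := by unfold tvDist; ring
    _ ≤ (1 / 4) * (2 * sqHellinger P Q * (4 - 2 * sqHellinger P Q)) := by gcongr
    _ ≤ 2 * sqHellinger P Q := by nlinarith

end Divergences

theorem one_sub_prod_le_sum_one_sub {ι : Type*} (s : Finset ι) {r : ι → ℝ}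
    (h0 : ∀ i ∈ s, 0 ≤ r i) (h1 : ∀ i ∈ s, r i ≤ 1) : 1 - ∏ i ∈ s, r i ≤ ∑ i ∈ s, (1 - r i) := by
  induction s using Finset.cons_induction with
  | empty => simp
  | cons a s ha ih =>
    rw [prod_cons, sum_cons]
    have h0a := h0 a (mem_cons_self a s)
    have h1a := h1 a (mem_cons_self a s)
    have hs := ih (fun i hi => h0 i (mem_cons_of_mem hi)) fun i hi => h1 i (mem_cons_of_mem hi)
    have hprod : ∏ i ∈ s, r i ≤ 1 :=
      prod_le_one (fun i hi => h0 i (mem_cons_of_mem hi)) fun i hi => h1 i (mem_cons_of_mem hi)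
    nlinarith

section ProductDivergences

variable {ι α : Type*} [Fintype ι] [DecidableEq ι] [Fintype α] {p q : ι → α → ℝ}

theorem bhattacharyya_pi (hp : ∀ i a, 0 ≤ p i a) (hq : ∀ i a, 0 ≤ q i a) :
    bhattacharyya (fun x : ι → α => ∏ i, p i (x i)) (fun x => ∏ i, q i (x i)) =
      ∏ i, bhattacharyya (p i) (q i) := by
  simp only [bhattacharyya, sqrt_prod univ fun i _ => hp i _, sqrt_prod univ fun i _ => hq i _,
    ← prod_mul_distrib]
  exact (Fintype.prod_sum fun i a => √(p i a) * √(q i a)).symm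

theorem sqHellinger_pi_le_sum (hp : ∀ i, IsDist (p i)) (hq : ∀ i, IsDist (q i)) :
    sqHellinger (fun x : ι → α => ∏ i, p i (x i)) (fun x => ∏ i, q i (x i)) ≤
      ∑ i, sqHellinger (p i) (q i) := by
  rw [sqHellinger_eq_one_sub_bhattacharyya (IsDist.pi hp) (IsDist.pi hq),
    bhattacharyya_pi (fun i => (hp i).1) fun i => (hq i).1]
  simp_rw [sqHellinger_eq_one_sub_bhattacharyya (hp _) (hq _)]
  refine one_sub_prod_le_sum_one_sub univ (fun i _ => ?_) fun i _ => ?_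
  · exact sum_nonneg fun a _ => mul_nonneg (sqrt_nonneg _) (sqrt_nonneg _)
  · linarith [sqHellinger_nonneg (p i) (q i),
      sqHellinger_eq_one_sub_bhattacharyya (hp i) (hq i)]

theorem tvDist_pi_sq_le_two_mul_sum_sqHellinger (hp : ∀ i, IsDist (p i))
    (hq : ∀ i, IsDist (q i)) :
    tvDist (fun x : ι → α => ∏ i, p i (x i)) (fun x => ∏ i, q i (x i)) ^ 2 ≤
      2 * ∑ i, sqHellinger (p i) (q i) :=
  (tvDist_sq_le_two_mul_sqHellinger (IsDist.pi hp) (IsDist.pi hq)).trans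
    (by gcongr; exact sqHellinger_pi_le_sum hp hq)

end ProductDivergences

theorem sum_mul_le_sqrt_sum_mul_sq {β : Type*} [Fintype β] {w : β → ℝ} (hw : IsDist w)
    (f : β → ℝ) : ∑ x, w x * f x ≤ √(∑ x, w x * f x ^ 2) := by
  refine le_sqrt_of_sq_le ?_
  have := sum_sq_le_sum_mul_sum_of_sq_le_mul univ (r := fun x => w x * f x)
    (fun x _ => hw.1 x) (fun x _ => mul_nonneg (hw.1 x) (sq_nonneg (f x)))
    fun x _ => (by ring : (w x * f x) ^ 2 = w x * (w x * f x ^ 2)).le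
  rwa [hw.2, one_mul] at this

theorem sq_sqrt_sub_sqrt_le {x y : ℝ} (hx : 0 < x) (hy : 0 ≤ y) :
    (√x - √y) ^ 2 ≤ (y - x) ^ 2 / x := by
  rw [le_div_iff₀ hx]
  have hx' : x ≤ (√x + √y) ^ 2 := by nlinarith [sq_sqrt hx.le, sqrt_nonneg x, sqrt_nonneg y]
  calc (√x - √y) ^ 2 * x ≤ (√x - √y) ^ 2 * (√x + √y) ^ 2 := by gcongr
    _ = ((√y) ^ 2 - (√x) ^ 2) ^ 2 := by ring
    _ = (y - x) ^ 2 := by rw [sq_sqrt hx.le, sq_sqrt hy]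

section EmpiricalHellinger

variable {α : Type*} [Fintype α] [DecidableEq α] {t : ℕ} {p : α → ℝ}

theorem sum_iid_mul_sq_sqrt_sub_sqrt_empirical_le (hp : IsDist p) (ht : t ≠ 0) (a : α) :
    ∑ v : Fin t → α, (∏ s, p (v s)) * (√(p a) - √(empirical t v a)) ^ 2 ≤ 1 / t := by
  have hw (v : Fin t → α) : 0 ≤ ∏ s, p (v s) := prod_nonneg fun s _ => hp.1 _
  rcases (hp.1 a).eq_or_lt with hpa | hpa
  · have hzero (v : Fin t → α) : (√(p a) - √(empirical t v a)) ^ 2 = empirical t v a := by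
      rw [← hpa, sqrt_zero, zero_sub, neg_sq, sq_sqrt (empirical_nonneg v a)]
    simp_rw [hzero, sum_iid_mul_empirical hp.2 ht, ← hpa]
    positivity
  · calc ∑ v : Fin t → α, (∏ s, p (v s)) * (√(p a) - √(empirical t v a)) ^ 2
        ≤ ∑ v : Fin t → α, (∏ s, p (v s)) * ((empirical t v a - p a) ^ 2 / p a) := by
          gcongr with v
          · exact hw v
          · exact sq_sqrt_sub_sqrt_le hpa (empirical_nonneg v a)
      _ = (∑ v : Fin t → α, (∏ s, p (v s)) * (empirical t v a - p a) ^ 2) / p a := by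
          rw [sum_div]; simp_rw [mul_div_assoc]
      _ = (1 - p a) / t := by
          rw [sum_iid_mul_sq_empirical_sub hp.2 ht]; field_simp
      _ ≤ 1 / t := by gcongr; linarith

theorem sum_iid_mul_sqHellinger_empirical_le (hp : IsDist p) (ht : t ≠ 0) :
    ∑ v : Fin t → α, (∏ s, p (v s)) * sqHellinger p (empirical t v) ≤
      Fintype.card α / (2 * t) := by
  calc ∑ v : Fin t → α, (∏ s, p (v s)) * sqHellinger p (empirical t v)
      = (1 / 2) * ∑ a, ∑ v : Fin t → α, (∏ s, p (v s)) * (√(p a) - √(empirical t v a)) ^ 2 := by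
        simp_rw [sqHellinger, mul_left_comm _ (1 / 2 : ℝ), mul_sum]
        rw [sum_comm]
    _ ≤ (1 / 2) * ∑ _a : α, 1 / (t : ℝ) := by
        gcongr with a
        exact sum_iid_mul_sq_sqrt_sub_sqrt_empirical_le hp ht a
    _ = Fintype.card α / (2 * t) := by
        rw [sum_const, card_univ, nsmul_eq_mul]; field_simp

end EmpiricalHellinger

theorem stmt12_general (n K t : ℕ) (ht : 1 ≤ t)
    (Dm : Fin n → Fin K → ℝ) (hDm : ∀ i, IsDist (Dm i)) :
    ∑ ω : Fin t → (Fin n → Fin K), (∏ s, ∏ i, Dm i (ω s i)) *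
        ((1 / 2) * ∑ θ : Fin n → Fin K, |(∏ i, Dm i (θ i)) - empProd t ω θ|)
      ≤ Real.sqrt (((n * K : ℕ) : ℝ) / (t : ℝ)) := by
  have ht0 : t ≠ 0 := by omega
  have hW : IsDist fun ω : Fin t → Fin n → Fin K => ∏ s, ∏ i, Dm i (ω s i) :=
    IsDist.pi fun _ => IsDist.pi hDm
  have hTV (ω : Fin t → Fin n → Fin K) :
      tvDist (fun θ => ∏ i, Dm i (θ i)) (empProd t ω) ^ 2 ≤
        2 * ∑ i, sqHellinger (Dm i) (empirical t fun s => ω s i) := by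
    rw [empProd_eq_prod_empirical]
    exact tvDist_pi_sq_le_two_mul_sum_sqHellinger (q := fun i => empirical t fun s => ω s i) hDm
      fun i => isDist_empirical ht0 _
  calc _ = ∑ ω : Fin t → Fin n → Fin K, (∏ s, ∏ i, Dm i (ω s i)) *
          tvDist (fun θ => ∏ i, Dm i (θ i)) (empProd t ω) := rfl
    _ ≤ √(∑ ω : Fin t → Fin n → Fin K, (∏ s, ∏ i, Dm i (ω s i)) *
          tvDist (fun θ => ∏ i, Dm i (θ i)) (empProd t ω) ^ 2) :=
        sum_mul_le_sqrt_sum_mul_sq hW _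
    _ ≤ √(∑ ω : Fin t → Fin n → Fin K, (∏ s, ∏ i, Dm i (ω s i)) *
          (2 * ∑ i, sqHellinger (Dm i) (empirical t fun s => ω s i))) := by
        gcongr with ω
        exacts [hW.1 ω, hTV ω]
    _ = √(2 * ∑ i, ∑ v : Fin t → Fin K,
          (∏ s, Dm i (v s)) * sqHellinger (Dm i) (empirical t v)) := by
        simp_rw [mul_left_comm _ (2 : ℝ), ← mul_sum,
          sum_samples_mul_sum_columns hDm fun i v => sqHellinger (Dm i) (empirical t v)]
    _ ≤ √(2 * ∑ _i : Fin n, (K : ℝ) / (2 * t)) := by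
        gcongr with i
        simpa using sum_iid_mul_sqHellinger_empirical_le (hDm i) ht0
    _ = √(((n * K : ℕ) : ℝ) / t) := by
        rw [sum_const, card_univ, Fintype.card_fin, nsmul_eq_mul]
        push_cast
        field_simp

/-- If `D = D_1 × ⋯ × D_n` is a product distribution on `[K]^n` and
`D̂^t` is the product of the empirical marginals of `t` i.i.d. samples from `D`, then
`E[δ(D, D̂^t)] ≤ √(nK/t)`, where `δ` is the total variation distance. -/
theorem stmt12 (n K t : ℕ) (hn : 1 ≤ n) (hK : 1 ≤ K) (ht : 1 ≤ t)
    (Dm : Fin n → Fin K → ℝ) (hDm : ∀ i, IsDist (Dm i)) :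
    ∑ ω : Fin t → (Fin n → Fin K), (∏ s, ∏ i, Dm i (ω s i)) *
        ((1 / 2) * ∑ θ : Fin n → Fin K, |(∏ i, Dm i (θ i)) - empProd t ω θ|)
      ≤ Real.sqrt (((n * K : ℕ) : ℝ) / (t : ℝ)) :=
  stmt12_general n K t ht Dm hDm
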